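/- Assume (A.2) and (A.3) and fix θ ∈ Θ. Define Ψ(s, θ) = ∫ φ(s, ε, θ) Q(dε) and, for κ > 0, Ψ^κ(s, θ) = ∫ φ(proj_S[s + κe], ε, θ) Q(dε). Then Ψ(·, θ) is continuous, hence uniformly continuous, on the compact set S; for every sequence of positive scalars κ_j → 0, the functions Ψ^{κ_j}(·, θ) converge uniformly on S to Ψ(·, θ); and consequently d(φ^{κ_j}(·,·,θ), φ(·,·,θ)) → 0 and d(φ_{κ_j}(·,·,θ), φ(·,·,θ)) → 0 as j → ∞. -/

import Mathlib

/-!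
Applying the Feller property to the coordinate functions makes `Ψ` sequentially continuous on
the compact box `S`, hence uniformly continuous. The shifted point `t = proj_S[s ± κe]` is within
`κ` of `s`, which gives the uniform convergence `Ψ^κ → Ψ`. Since `proj_S` is `1`-Lipschitz and
fixes `S`, `φ^κ(s, ε)` is within `κ` of `φ(t, ε)`; by monotonicity `φ(t, ε)` and `φ(s, ε)` are
ordered, so the max norm of their difference is at most the sum of its coordinates, whose
integral is at most `k ‖Ψ(t) − Ψ(s)‖`. Hence `d(φ^κ, φ) ≤ κ + k sup_s ‖Ψ(t) − Ψ(s)‖ → 0`,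
and likewise for `φ_κ`.
-/

open MeasureTheory Filter Topology
open scoped ENNReal NNReal

/-- Componentwise (Euclidean) projection onto the hypercube `Set.Icc a b`. -/
noncomputable def projBox {k : ℕ} (a b : Fin k → ℝ) (s : Fin k → ℝ) : Fin k → ℝ :=
  fun i => max (a i) (min (b i) (s i))

/-- The majorizing map `φ^κ(s,ε,θ) = proj_S [φ(proj_S[s + κe], ε, θ) + κe]`. -/
noncomputable def phiUp {k l : ℕ} {E : Type*} (a b : Fin k → ℝ)
    (φ : (Fin k → ℝ) → E → (Fin l → ℝ) → (Fin k → ℝ)) (κ : ℝ)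
    (s : Fin k → ℝ) (ε : E) (θ : Fin l → ℝ) : Fin k → ℝ :=
  projBox a b (fun i => φ (projBox a b (fun j => s j + κ)) ε θ i + κ)

/-- The minorizing map `φ_κ(s,ε,θ) = proj_S [φ(proj_S[s − κe], ε, θ) − κe]`. -/
noncomputable def phiDown {k l : ℕ} {E : Type*} (a b : Fin k → ℝ)
    (φ : (Fin k → ℝ) → E → (Fin l → ℝ) → (Fin k → ℝ)) (κ : ℝ)
    (s : Fin k → ℝ) (ε : E) (θ : Fin l → ℝ) : Fin k → ℝ :=
  projBox a b (fun i => φ (projBox a b (fun j => s j - κ)) ε θ i - κ)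

/-- `μ` is an invariant probability (supported on the hypercube `Set.Icc a b`)
for the random map `ψ : S × E → S`:  `μ(A) = ∫ Q{ε : ψ(s,ε) ∈ A} μ(ds)`. -/
def IsInvariantProb {k : ℕ} {E : Type*} [MeasurableSpace E] (Q : Measure E)
    (a b : Fin k → ℝ) (ψ : (Fin k → ℝ) → E → (Fin k → ℝ))
    (μ : Measure (Fin k → ℝ)) : Prop :=
  IsProbabilityMeasure μ ∧ μ (Set.Icc a b)ᶜ = 0 ∧
    ∀ A : Set (Fin k → ℝ), MeasurableSet A →
      μ A = ∫⁻ s, Q {ε | ψ s ε ∈ A} ∂μ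

/-- The Feller property (A.3) on the hypercube `Set.Icc a b` for a random map `ψ`. -/
def FellerOn {k : ℕ} {E : Type*} [MeasurableSpace E] (Q : Measure E)
    (a b : Fin k → ℝ) (ψ : (Fin k → ℝ) → E → (Fin k → ℝ)) : Prop :=
  ∀ f : (Fin k → ℝ) → ℝ, Continuous f →
    ∀ (u : ℕ → Fin k → ℝ) (s : Fin k → ℝ),
      (∀ n, u n ∈ Set.Icc a b) → s ∈ Set.Icc a b → Tendsto u atTop (𝓝 s) →
      Tendsto (fun n => ∫ ε, f (ψ (u n) ε) ∂Q) atTop (𝓝 (∫ ε, f (ψ s ε) ∂Q))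

/-- The distance `d` of (2.2) between two random maps, using the max norm on `ℝ^k`
(the sup norm is the default norm on `Fin k → ℝ`). -/
noncomputable def dParam {k : ℕ} {E : Type*} [MeasurableSpace E] (Q : Measure E)
    (a b : Fin k → ℝ) (ψ χ : (Fin k → ℝ) → E → (Fin k → ℝ)) : ℝ :=
  ⨆ s : Set.Icc a b, ∫ ε, ‖ψ s ε - χ s ε‖ ∂Q

/-- Sample path of the random dynamical system `s_n = φ(s_{n-1}, ε_n, θ)` started at `s₀`. -/
def path {k l : ℕ} {E : Type*} (φ : (Fin k → ℝ) → E → (Fin l → ℝ) → (Fin k → ℝ))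
    (θ : Fin l → ℝ) (s₀ : Fin k → ℝ) (ω : ℕ → E) : ℕ → Fin k → ℝ
  | 0 => s₀
  | n + 1 => φ (path φ θ s₀ ω n) (ω n) θ

/-- `γ` is the countable product `Q^{⊗ℕ}`, characterized on cylinder sets. -/
def IsProductOf {E : Type*} [MeasurableSpace E] (Q : Measure E)
    (γ : Measure (ℕ → E)) : Prop :=
  IsProbabilityMeasure γ ∧
    ∀ (n : ℕ) (A : Fin n → Set E), (∀ i, MeasurableSet (A i)) →
      γ {ω | ∀ i : Fin n, ω i ∈ A i} = ∏ i, Q (A i)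

section ProjBox

variable {k : ℕ} {a b : Fin k → ℝ}

lemma projBox_mem (hab : a ≤ b) (t : Fin k → ℝ) : projBox a b t ∈ Set.Icc a b :=
  ⟨fun _ => le_max_left _ _, fun i => max_le (hab i) (min_le_left _ _)⟩

lemma projBox_of_mem {s : Fin k → ℝ} (hs : s ∈ Set.Icc a b) : projBox a b s = s :=
  funext fun i => by simp [projBox, hs.1 i, hs.2 i]

lemma dist_projBox_projBox_le (t s : Fin k → ℝ) :
    dist (projBox a b t) (projBox a b s) ≤ dist t s :=
  (dist_pi_le_iff dist_nonneg).2 fun i => by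
    have h := ((LipschitzWith.id.const_min (b i)).const_max (a i)).dist_le_mul (t i) (s i)
    rw [NNReal.coe_one, one_mul] at h
    exact h.trans (dist_le_pi_dist t s i)

lemma dist_projBox_le {s : Fin k → ℝ} (hs : s ∈ Set.Icc a b) (t : Fin k → ℝ) :
    dist (projBox a b t) s ≤ dist t s := by
  simpa only [projBox_of_mem hs] using dist_projBox_projBox_le (a := a) (b := b) t s

lemma dist_projBox_add_le {s : Fin k → ℝ} (hs : s ∈ Set.Icc a b) {κ : ℝ} (hκ : 0 ≤ κ) :
    dist (projBox a b fun i => s i + κ) s ≤ κ :=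
  (dist_projBox_le hs _).trans <| (dist_pi_le_iff hκ).2 fun i => by simp [abs_of_nonneg hκ]

lemma dist_projBox_sub_le {s : Fin k → ℝ} (hs : s ∈ Set.Icc a b) {κ : ℝ} (hκ : 0 ≤ κ) :
    dist (projBox a b fun i => s i - κ) s ≤ κ :=
  (dist_projBox_le hs _).trans <| (dist_pi_le_iff hκ).2 fun i => by simp [abs_of_nonneg hκ]

lemma le_projBox_add {s : Fin k → ℝ} (hs : s ∈ Set.Icc a b) {κ : ℝ} (hκ : 0 ≤ κ) :
    s ≤ projBox a b fun i => s i + κ :=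
  fun i => le_max_of_le_right (le_min (hs.2 i) (by linarith))

lemma projBox_sub_le {s : Fin k → ℝ} (hs : s ∈ Set.Icc a b) {κ : ℝ} (hκ : 0 ≤ κ) :
    (projBox a b fun i => s i - κ) ≤ s :=
  fun i => max_le (hs.1 i) ((min_le_right _ _).trans (by linarith))

end ProjBox

section Integral

variable {E ι : Type*} [MeasurableSpace E] {Q : Measure E} [Fintype ι]

lemma norm_le_sum_of_nonneg {v : ι → ℝ} (hv : 0 ≤ v) : ‖v‖ ≤ ∑ i, v i :=
  (pi_norm_le_iff_of_nonneg (Finset.sum_nonneg fun i _ => hv i)).2 fun i => by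
    rw [Real.norm_of_nonneg (hv i)]
    exact Finset.single_le_sum (fun j _ => hv j) (Finset.mem_univ i)

lemma integral_norm_le_card_mul_norm_integral {v : E → ι → ℝ} (hv : Integrable v Q)
    (hv0 : ∀ ε, 0 ≤ v ε) : ∫ ε, ‖v ε‖ ∂Q ≤ Fintype.card ι * ‖∫ ε, v ε ∂Q‖ := by
  have hvi : ∀ i, Integrable (v · i) Q := integrable_pi_iff.1 hv
  calc ∫ ε, ‖v ε‖ ∂Q
      ≤ ∫ ε, ∑ i, v ε i ∂Q :=
        integral_mono_of_nonneg (ae_of_all _ fun _ => norm_nonneg _)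
          (integrable_finsetSum _ fun i _ => hvi i)
          (ae_of_all _ fun ε => norm_le_sum_of_nonneg (hv0 ε))
    _ = ∑ i, (∫ ε, v ε ∂Q) i := by
        rw [integral_finsetSum _ fun i _ => hvi i]
        exact Finset.sum_congr rfl fun i _ => (eval_integral hvi i).symm
    _ ≤ ∑ _i : ι, ‖∫ ε, v ε ∂Q‖ :=
        Finset.sum_le_sum fun i _ => (Real.le_norm_self _).trans (norm_le_pi_norm _ i)
    _ = Fintype.card ι * ‖∫ ε, v ε ∂Q‖ := by simp

lemma integral_dist_le_card_mul_dist_integral {f g : E → ι → ℝ} (hf : Integrable f Q)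
    (hg : Integrable g Q) (hfg : f ≤ g ∨ g ≤ f) :
    ∫ ε, dist (g ε) (f ε) ∂Q ≤ Fintype.card ι * dist (∫ ε, g ε ∂Q) (∫ ε, f ε ∂Q) := by
  wlog hle : f ≤ g generalizing f g
  · simpa only [dist_comm] using this hg hf hfg.symm (hfg.resolve_left hle)
  simpa only [dist_eq_norm, Pi.sub_apply, integral_sub hg hf] using
    integral_norm_le_card_mul_norm_integral (hg.sub hf) fun ε i => sub_nonneg.2 (hle ε i)

lemma integrable_of_mem_Icc [IsFiniteMeasure Q] {f : E → ι → ℝ} {a b : ι → ℝ}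
    (hf : Measurable f) (hab : ∀ ε, f ε ∈ Set.Icc a b) : Integrable f Q :=
  integrable_pi_iff.2 fun i => Integrable.of_mem_Icc (a i) (b i)
    ((measurable_pi_apply i).comp hf).aemeasurable
    (ae_of_all _ fun ε => ⟨(hab ε).1 i, (hab ε).2 i⟩)

variable [IsProbabilityMeasure Q]

lemma integral_norm_sub_le_add_card_mul_dist {w f g : E → ι → ℝ} {c : ℝ}
    (hf : Integrable f Q) (hg : Integrable g Q) (hfg : f ≤ g ∨ g ≤ f)
    (hw : ∀ ε, dist (w ε) (g ε) ≤ c) :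
    ∫ ε, ‖w ε - f ε‖ ∂Q ≤ c + Fintype.card ι * dist (∫ ε, g ε ∂Q) (∫ ε, f ε ∂Q) := by
  have hdist : Integrable (fun ε => dist (g ε) (f ε)) Q := by
    simpa only [dist_eq_norm, Pi.sub_apply] using (hg.sub hf).norm
  calc ∫ ε, ‖w ε - f ε‖ ∂Q
      ≤ ∫ ε, (c + dist (g ε) (f ε)) ∂Q :=
        integral_mono_of_nonneg (ae_of_all _ fun _ => norm_nonneg _)
          ((integrable_const c).add hdist) <| ae_of_all _ fun ε => by
            change ‖w ε - f ε‖ ≤ c + dist (g ε) (f ε)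
            rw [← dist_eq_norm]
            linarith [dist_triangle (w ε) (g ε) (f ε), hw ε]
    _ = c + ∫ ε, dist (g ε) (f ε) ∂Q := by
        rw [integral_add (integrable_const c) hdist, integral_const, probReal_univ, one_smul]
    _ ≤ _ := by gcongr; exact integral_dist_le_card_mul_dist_integral hf hg hfg

end Integral

lemma continuousOn_integral_of_fellerOn {k : ℕ} {E : Type*} [MeasurableSpace E] {Q : Measure E}
    {a b : Fin k → ℝ} {ψ : (Fin k → ℝ) → E → Fin k → ℝ}
    (hint : ∀ s ∈ Set.Icc a b, Integrable (ψ s) Q) (hψ : FellerOn Q a b ψ) :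
    ContinuousOn (fun s => ∫ ε, ψ s ε ∂Q) (Set.Icc a b) := by
  rw [continuousOn_iff_continuous_domRestrict, continuous_iff_seqContinuous]
  intro u s hu
  refine tendsto_pi_nhds.2 fun i => ?_
  have heval : ∀ s ∈ Set.Icc a b, (∫ ε, ψ s ε ∂Q) i = ∫ ε, ψ s ε i ∂Q :=
    fun s hs => eval_integral (integrable_pi_iff.1 (hint s hs)) i
  simp only [Function.comp_def, Set.domRestrict_apply, heval _ (u _).2, heval _ s.2]
  exact hψ (fun x => x i) (continuous_apply i) (fun n => u n) s (fun n => (u n).2) s.2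
    ((continuous_subtype_val.tendsto s).comp hu)

section UniformConvergence

variable {ι α β : Type*} [PseudoMetricSpace β] {l : Filter ι} {S : Set α}

lemma UniformContinuousOn.tendstoUniformlyOn_comp [PseudoMetricSpace α] {f : α → β}
    {g : ι → α → α} {u : ι → ℝ} (hf : UniformContinuousOn f S)
    (hgS : ∀ j, ∀ s ∈ S, g j s ∈ S) (hg : ∀ j, ∀ s ∈ S, dist (g j s) s ≤ u j)
    (hu : Tendsto u l (𝓝 0)) :
    TendstoUniformlyOn (fun j s => f (g j s)) f l S :=
  hf.comp_tendstoUniformlyOn_eventually (.of_forall hgS) (fun _ hs => hs) <|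
    Metric.tendstoUniformlyOn_iff.2 fun ε hε => (hu.eventually (gt_mem_nhds hε)).mono
      fun j hj s hs => by rw [dist_comm]; exact (hg j s hs).trans_lt hj

lemma tendsto_iSup_of_le_add_mul_dist {F : ι → α → ℝ} {G : ι → α → β} {f : α → β}
    {κ : ι → ℝ} {C : ℝ} (hC : 0 ≤ C) (hF0 : ∀ j, ∀ s ∈ S, 0 ≤ F j s)
    (hF : ∀ j, ∀ s ∈ S, F j s ≤ κ j + C * dist (G j s) (f s))
    (hκ : Tendsto κ l (𝓝 0)) (hG : TendstoUniformlyOn G f l S) :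
    Tendsto (fun j => ⨆ s : S, F j s) l (𝓝 0) := by
  rw [Metric.tendsto_nhds]
  intro ε hε
  set δ := ε / 2 / (C + 1)
  have hδ : 0 < δ := by positivity
  have hCδ : C * δ < ε / 2 :=
    calc C * δ < (C + 1) * δ := by gcongr; linarith
      _ = ε / 2 := mul_div_cancel₀ _ (by positivity)
  filter_upwards [hκ.eventually (gt_mem_nhds (half_pos hε)),
    Metric.tendstoUniformlyOn_iff.1 hG δ hδ] with j hκj hGj
  have hsup : ⨆ s : S, F j s ≤ ε / 2 + C * δ :=
    Real.iSup_le (fun s => (hF j s s.2).trans <| by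
      gcongr
      rw [dist_comm]
      exact (hGj s s.2).le) (by positivity)
  rw [Real.dist_eq, sub_zero, abs_of_nonneg (Real.iSup_nonneg fun s : S => hF0 j s s.2)]
  linarith

end UniformConvergence

section Perturbation

variable {k l : ℕ} {E : Type*} [MeasurableSpace E] {Q : Measure E} [IsProbabilityMeasure Q]
  {a b : Fin k → ℝ} {φ : (Fin k → ℝ) → E → (Fin l → ℝ) → (Fin k → ℝ)} {θ : Fin l → ℝ}
  {κ : ℝ} {s : Fin k → ℝ}

lemma integral_norm_phiUp_sub_le (hab : a ≤ b)
    (hmaps : ∀ s ∈ Set.Icc a b, ∀ ε, φ s ε θ ∈ Set.Icc a b)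
    (hmono : ∀ ε, MonotoneOn (fun s => φ s ε θ) (Set.Icc a b))
    (hint : ∀ s ∈ Set.Icc a b, Integrable (fun ε => φ s ε θ) Q) (hκ : 0 ≤ κ)
    (hs : s ∈ Set.Icc a b) :
    ∫ ε, ‖phiUp a b φ κ s ε θ - φ s ε θ‖ ∂Q ≤
      κ + k * dist (∫ ε, φ (projBox a b fun i => s i + κ) ε θ ∂Q) (∫ ε, φ s ε θ ∂Q) := by
  have ht := projBox_mem hab fun i => s i + κ
  have h := integral_norm_sub_le_add_card_mul_dist (w := fun ε => phiUp a b φ κ s ε θ)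
    (hint s hs) (hint _ ht) (Or.inl fun ε => hmono ε hs ht (le_projBox_add hs hκ))
    fun ε => dist_projBox_add_le (hmaps _ ht ε) hκ
  rwa [Fintype.card_fin] at h

lemma integral_norm_phiDown_sub_le (hab : a ≤ b)
    (hmaps : ∀ s ∈ Set.Icc a b, ∀ ε, φ s ε θ ∈ Set.Icc a b)
    (hmono : ∀ ε, MonotoneOn (fun s => φ s ε θ) (Set.Icc a b))
    (hint : ∀ s ∈ Set.Icc a b, Integrable (fun ε => φ s ε θ) Q) (hκ : 0 ≤ κ)
    (hs : s ∈ Set.Icc a b) :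
    ∫ ε, ‖phiDown a b φ κ s ε θ - φ s ε θ‖ ∂Q ≤
      κ + k * dist (∫ ε, φ (projBox a b fun i => s i - κ) ε θ ∂Q) (∫ ε, φ s ε θ ∂Q) := by
  have ht := projBox_mem hab fun i => s i - κ
  have h := integral_norm_sub_le_add_card_mul_dist (w := fun ε => phiDown a b φ κ s ε θ)
    (hint s hs) (hint _ ht) (Or.inr fun ε => hmono ε ht hs (projBox_sub_le hs hκ))
    fun ε => dist_projBox_sub_le (hmaps _ ht ε) hκ
  rwa [Fintype.card_fin] at h

end Perturbation

theorem stmt1_general {k l : ℕ} (a b : Fin k → ℝ) (hab : ∀ i, a i < b i)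
    {E : Type*} [MeasurableSpace E] (Q : Measure E) [IsProbabilityMeasure Q]
    (Θ : Set (Fin l → ℝ))
    (φ : (Fin k → ℝ) → E → (Fin l → ℝ) → (Fin k → ℝ))
    (hmaps : ∀ θ ∈ Θ, ∀ s ∈ Set.Icc a b, ∀ ε, φ s ε θ ∈ Set.Icc a b)
    (hA1 : Measurable fun q : (Fin k → ℝ) × E × (Fin l → ℝ) => φ q.1 q.2.1 q.2.2)
    (hA2 : ∀ ε, ∀ θ ∈ Θ, MonotoneOn (fun s => φ s ε θ) (Set.Icc a b))
    (hA3 : ∀ θ ∈ Θ, FellerOn Q a b (fun s ε => φ s ε θ))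
    (θ : Fin l → ℝ) (hθ : θ ∈ Θ) :
    ContinuousOn (fun s => ∫ ε, φ s ε θ ∂Q) (Set.Icc a b) ∧
    UniformContinuousOn (fun s => ∫ ε, φ s ε θ ∂Q) (Set.Icc a b) ∧
    ∀ κs : ℕ → ℝ, (∀ j, 0 < κs j) → Tendsto κs atTop (𝓝 0) →
      TendstoUniformlyOn
        (fun j s => ∫ ε, φ (projBox a b (fun i => s i + κs j)) ε θ ∂Q)
        (fun s => ∫ ε, φ s ε θ ∂Q) atTop (Set.Icc a b) ∧
      Tendsto (fun j => dParam Q a b (fun s ε => phiUp a b φ (κs j) s ε θ)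
        (fun s ε => φ s ε θ)) atTop (𝓝 0) ∧
      Tendsto (fun j => dParam Q a b (fun s ε => phiDown a b φ (κs j) s ε θ)
        (fun s ε => φ s ε θ)) atTop (𝓝 0) := by
  have hab' : a ≤ b := fun i => (hab i).le
  have hint : ∀ s ∈ Set.Icc a b, Integrable (fun ε => φ s ε θ) Q := fun s hs =>
    integrable_of_mem_Icc
      (hA1.comp (measurable_const.prodMk (measurable_id.prodMk measurable_const)))
      (hmaps θ hθ s hs)
  have hcont := continuousOn_integral_of_fellerOn hint (hA3 θ hθ)
  have hucont := isCompact_Icc.uniformContinuousOn_of_continuous hcont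
  refine ⟨hcont, hucont, fun κs hpos hlim => ?_⟩
  have hκ : ∀ j, 0 ≤ κs j := fun j => (hpos j).le
  have hup := hucont.tendstoUniformlyOn_comp (u := κs)
    (fun j s _ => projBox_mem hab' fun i => s i + κs j)
    (fun j s hs => dist_projBox_add_le hs (hκ j)) hlim
  have hdown := hucont.tendstoUniformlyOn_comp (u := κs)
    (fun j s _ => projBox_mem hab' fun i => s i - κs j)
    (fun j s hs => dist_projBox_sub_le hs (hκ j)) hlim
  refine ⟨hup, ?_, ?_⟩
  · exact tendsto_iSup_of_le_add_mul_dist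
      (F := fun j s => ∫ ε, ‖phiUp a b φ (κs j) s ε θ - φ s ε θ‖ ∂Q) (Nat.cast_nonneg k)
      (fun j s _ => integral_nonneg fun _ => norm_nonneg _)
      (fun j s hs => integral_norm_phiUp_sub_le hab' (hmaps θ hθ) (fun ε => hA2 ε θ hθ) hint
        (hκ j) hs) hlim hup
  · exact tendsto_iSup_of_le_add_mul_dist
      (F := fun j s => ∫ ε, ‖phiDown a b φ (κs j) s ε θ - φ s ε θ‖ ∂Q) (Nat.cast_nonneg k)
      (fun j s _ => integral_nonneg fun _ => norm_nonneg _)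
      (fun j s hs => integral_norm_phiDown_sub_le hab' (hmaps θ hθ) (fun ε => hA2 ε θ hθ) hint
        (hκ j) hs) hlim hdown

/-- `Ψ(·,θ)` is (uniformly) continuous on `S`; `Ψ^{κ_j}(·,θ) → Ψ(·,θ)` uniformly on `S`
for any positive `κ_j → 0`; and consequently `d(φ^{κ_j}(·,·,θ), φ(·,·,θ)) → 0` and
`d(φ_{κ_j}(·,·,θ), φ(·,·,θ)) → 0`. -/
theorem stmt1 {k l : ℕ} (a b : Fin k → ℝ) (hab : ∀ i, a i < b i)
    {E : Type*} [MeasurableSpace E] (Q : Measure E) [IsProbabilityMeasure Q]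
    (Θ : Set (Fin l → ℝ)) (hΘ : IsCompact Θ)
    (φ : (Fin k → ℝ) → E → (Fin l → ℝ) → (Fin k → ℝ))
    (hmaps : ∀ θ ∈ Θ, ∀ s ∈ Set.Icc a b, ∀ ε, φ s ε θ ∈ Set.Icc a b)
    (hA1 : Measurable fun q : (Fin k → ℝ) × E × (Fin l → ℝ) => φ q.1 q.2.1 q.2.2)
    (hA2 : ∀ ε, ∀ θ ∈ Θ, MonotoneOn (fun s => φ s ε θ) (Set.Icc a b))
    (hA3 : ∀ θ ∈ Θ, FellerOn Q a b (fun s ε => φ s ε θ))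
    (θ : Fin l → ℝ) (hθ : θ ∈ Θ) :
    ContinuousOn (fun s => ∫ ε, φ s ε θ ∂Q) (Set.Icc a b) ∧
    UniformContinuousOn (fun s => ∫ ε, φ s ε θ ∂Q) (Set.Icc a b) ∧
    ∀ κs : ℕ → ℝ, (∀ j, 0 < κs j) → Tendsto κs atTop (𝓝 0) →
      TendstoUniformlyOn
        (fun j s => ∫ ε, φ (projBox a b (fun i => s i + κs j)) ε θ ∂Q)
        (fun s => ∫ ε, φ s ε θ ∂Q) atTop (Set.Icc a b) ∧
      Tendsto (fun j => dParam Q a b (fun s ε => phiUp a b φ (κs j) s ε θ)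
        (fun s ε => φ s ε θ)) atTop (𝓝 0) ∧
      Tendsto (fun j => dParam Q a b (fun s ε => phiDown a b φ (κs j) s ε θ)
        (fun s ε => φ s ε θ)) atTop (𝓝 0) :=
  stmt1_general a b hab Q Θ φ hmaps hA1 hA2 hA3 θ hθ
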